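/- arXiv:math/0311495 — 2 statements merged into one kernel-verified Lean document; each statement's English description precedes it below -/
import Mathlib

section
/- Let λ be a Lagrangian subspace of H and let U : H → H be a bijective isometric linear map with U ∘ J = J ∘ U such that U − Id is a compact operator. Then U(λ) is a Lagrangian subspace, and for every Lagrangian subspace ν of H, the pair (ν, λ) is a Fredholm pair if and only if (ν, U(λ)) is a Fredholm pair. -/
open scoped RealInnerProductSpace

/-- The annihilator of a set `μ` with respect to the symplectic form `ω(x, y) = ⟪J x, y⟫`. -/
def omegaAnn {H : Type*} [NormedAddCommGroup H] [InnerProductSpace ℝ H]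
    (J : H →L[ℝ] H) (μ : Set H) : Set H :=
  {x : H | ∀ y ∈ μ, ⟪J x, y⟫ = 0}

/-- A pair of closed subspaces is a Fredholm pair if their intersection is finite-dimensional
and their sum is closed and of finite codimension. -/
def IsFredholmPair {H : Type*} [NormedAddCommGroup H] [InnerProductSpace ℝ H]
    (μ ν : Submodule ℝ H) : Prop :=
  FiniteDimensional ℝ ↥(μ ⊓ ν) ∧ IsClosed ((μ ⊔ ν : Submodule ℝ H) : Set H) ∧
    FiniteDimensional ℝ (H ⧸ (μ ⊔ ν))

/-!
For `W : H →L[ℝ] H` let `addMap ν λ W : ν × λ → H` be `(a, b) ↦ a + W b`. When `W` is injective,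
its kernel is isomorphic to `ν ⊓ W λ` and its range is `ν ⊔ W λ`, so the first two Fredholm-pair
conditions for `(ν, W λ)` say exactly that `addMap ν λ W` has finite-dimensional kernel and closed
range. Between Banach spaces such operators are characterised by a sequential property: every
bounded sequence with Cauchy image has a convergent subsequence. That property survives compact
perturbations, and `addMap ν λ U - addMap ν λ 1` factors through `U - 1`, hence is compact.
For Lagrangian subspaces the codimension condition is automatic, since `μᗮ = J μ` gives
`(ν ⊔ μ)ᗮ = J (ν ⊓ μ)`; and a unitary commuting with `J` preserves `ω`, so it maps Lagrangians
to Lagrangians.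
-/

open Filter Topology Bornology Set Function

theorem IsCompactOperator.exists_subseq_tendsto {𝕜 X Y : Type*} [NontriviallyNormedField 𝕜]
    [NormedAddCommGroup X] [NormedSpace 𝕜 X] [NormedAddCommGroup Y] [NormedSpace 𝕜 Y]
    {K : X →L[𝕜] Y} (hK : IsCompactOperator K) {x : ℕ → X} (hx : IsBounded (range x)) :
    ∃ z, ∃ φ : ℕ → ℕ, StrictMono φ ∧ Tendsto (K ∘ x ∘ φ) atTop (𝓝 z) := by
  obtain ⟨M, hM, hKM⟩ := hK.image_subset_compact_of_bounded (f := (K : X →ₗ[𝕜] Y)) hx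
  obtain ⟨z, -, φ, hφ, h⟩ :=
    hM.tendsto_subseq fun n => hKM (mem_image_of_mem K (mem_range_self n))
  exact ⟨z, φ, hφ, h⟩

namespace ContinuousLinearMap

variable {𝕜 X Y Z : Type*} [RCLike 𝕜] [NormedAddCommGroup X] [NormedSpace 𝕜 X]
  [NormedAddCommGroup Y] [NormedSpace 𝕜 Y] [NormedAddCommGroup Z] [NormedSpace 𝕜 Z]

def IsSeqProperOnBounded (T : X →L[𝕜] Y) : Prop :=
  ∀ x : ℕ → X, IsBounded (range x) → CauchySeq (T ∘ x) →
    ∃ a, ∃ φ : ℕ → ℕ, StrictMono φ ∧ Tendsto (x ∘ φ) atTop (𝓝 a)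

theorem IsSeqProperOnBounded.add_compact {T K : X →L[𝕜] Y} (hT : T.IsSeqProperOnBounded)
    (hK : IsCompactOperator K) : (T + K).IsSeqProperOnBounded := by
  intro x hx hTKx
  obtain ⟨z, φ, hφ, hKx⟩ := hK.exists_subseq_tendsto hx
  have hTx : CauchySeq (T ∘ x ∘ φ) := by
    simpa [Function.comp_def] using uniformContinuous_sub.comp_cauchySeq
      ((hTKx.comp_tendsto hφ.tendsto_atTop).prodMk hKx.cauchySeq)
  obtain ⟨a, ψ, hψ, h⟩ := hT (x ∘ φ) (hx.subset (range_comp_subset_range φ x)) hTx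
  exact ⟨a, φ ∘ ψ, hφ.comp hψ, h⟩

theorem isSeqProperOnBounded_add_compact_iff {T K : X →L[𝕜] Y} (hK : IsCompactOperator K) :
    (T + K).IsSeqProperOnBounded ↔ T.IsSeqProperOnBounded :=
  ⟨fun h => by simpa using h.add_compact (K := -K) (by simpa using hK.neg),
    fun h => h.add_compact hK⟩

theorem IsSeqProperOnBounded.prod {T : X →L[𝕜] Y} (hT : T.IsSeqProperOnBounded)
    (K : X →L[𝕜] Z) : (T.prod K).IsSeqProperOnBounded := fun x hx hTKx =>
  hT x hx (uniformContinuous_fst.comp_cauchySeq hTKx)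

theorem IsSeqProperOnBounded.of_prod_compact {T : X →L[𝕜] Y} {K : X →L[𝕜] Z}
    (hTK : (T.prod K).IsSeqProperOnBounded) (hK : IsCompactOperator K) :
    T.IsSeqProperOnBounded := by
  intro x hx hTx
  obtain ⟨z, φ, hφ, hKx⟩ := hK.exists_subseq_tendsto hx
  obtain ⟨a, ψ, hψ, h⟩ := hTK (x ∘ φ) (hx.subset (range_comp_subset_range φ x))
    ((hTx.comp_tendsto hφ.tendsto_atTop).prodMk hKx.cauchySeq)
  exact ⟨a, φ ∘ ψ, hφ.comp hψ, h⟩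

theorem isSeqProperOnBounded_of_antilipschitz [CompleteSpace X] {T : X →L[𝕜] Y} {K : NNReal}
    (hT : AntilipschitzWith K T) : T.IsSeqProperOnBounded := fun x _ hTx =>
  let ⟨a, ha⟩ := cauchySeq_tendsto_of_complete
    ((hT.isUniformInducing T.uniformContinuous).cauchy_map_iff.mp (by rwa [Filter.map_map]))
  ⟨a, id, strictMono_id, ha⟩

theorem IsSeqProperOnBounded.exists_antilipschitzWith {T : X →L[𝕜] Y}
    (hT : T.IsSeqProperOnBounded) (hinj : Injective T) : ∃ K, AntilipschitzWith K T := by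
  by_contra! hnot
  have hu : ∀ n : ℕ, ∃ u : X, ‖u‖ = 1 ∧ (n + 1) * ‖T u‖ < 1 := fun n => by
    by_contra! h
    exact hnot (n + 1) (antilipschitz_of_bound_of_norm_one T fun u hu => by exact_mod_cast h u hu)
  choose u hu_norm hTu using hu
  have hTu0 : Tendsto (T ∘ u) atTop (𝓝 0) := by
    refine squeeze_zero_norm (fun n => ?_) tendsto_one_div_add_atTop_nhds_zero_nat
    rw [le_div_iff₀ (by positivity), mul_comm]
    exact (hTu n).le
  obtain ⟨a, φ, hφ, ha⟩ := hT u (isBounded_iff_forall_norm_le.mpr ⟨1, by simp [hu_norm]⟩)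
    hTu0.cauchySeq
  have ha_norm : ‖a‖ = 1 :=
    tendsto_nhds_unique ha.norm (by simp [hu_norm])
  have hTa : T a = 0 :=
    tendsto_nhds_unique ((T.continuous.tendsto a).comp ha) (hTu0.comp hφ.tendsto_atTop)
  simp [hinj (hTa.trans T.map_zero.symm)] at ha_norm

theorem IsSeqProperOnBounded.finiteDimensional_ker {T : X →L[𝕜] Y}
    (hT : T.IsSeqProperOnBounded) : FiniteDimensional 𝕜 T.ker := by
  refine .of_isCompact_closedBall₀ 𝕜 one_pos (isCompact_iff_isSeqCompact.mpr fun u hu => ?_)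
  have hu_norm : ∀ n, ‖(u n : X)‖ ≤ 1 := fun n => by simpa using hu n
  have hTu : T ∘ Subtype.val ∘ u = fun _ => 0 := funext fun n => (u n).2
  obtain ⟨a, φ, hφ, ha⟩ := hT (Subtype.val ∘ u)
    (isBounded_iff_forall_norm_le.mpr ⟨1, by simpa using hu_norm⟩)
    (by rw [hTu]; exact cauchySeq_const 0)
  have ha_ker : a ∈ T.ker :=
    T.isClosed_ker.mem_of_tendsto ha (.of_forall fun n => (u (φ n)).2)
  refine ⟨⟨a, ha_ker⟩, ?_, φ, hφ, tendsto_subtype_rng.mpr ha⟩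
  simpa using le_of_tendsto ha.norm (.of_forall fun n => hu_norm (φ n))

section Projection

variable {T : X →L[𝕜] Y} {P : X →L[𝕜] T.ker}

theorem injective_prod_of_projection (hP : ∀ x : T.ker, P x = x) :
    Injective (T.prod P) := by
  refine (injective_iff_map_eq_zero _).mpr fun x hx => ?_
  obtain ⟨hTx, hPx⟩ := Prod.ext_iff.mp hx
  exact congrArg Subtype.val ((hP ⟨x, hTx⟩).symm.trans hPx)

theorem range_prod_of_projection (hP : ∀ x : T.ker, P x = x) :
    range (T.prod P) = range T ×ˢ univ := by
  ext ⟨y, k⟩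
  simp only [mem_range, prod_apply, Prod.mk.injEq, mem_prod, mem_univ, and_true]
  refine ⟨fun ⟨x, hx, _⟩ => ⟨x, hx⟩, ?_⟩
  rintro ⟨x, rfl⟩
  refine ⟨x - P x + k, ?_, ?_⟩
  · simp
  · simp [hP]

theorem isClosed_range_prod_iff_of_projection (hP : ∀ x : T.ker, P x = x) :
    IsClosed (range (T.prod P)) ↔ IsClosed (range T) := by
  rw [range_prod_of_projection hP, prod_univ]
  exact isQuotientMap_fst.isClosed_preimage

end Projection

theorem isSeqProperOnBounded_iff [CompleteSpace X] [CompleteSpace Y] {T : X →L[𝕜] Y} :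
    T.IsSeqProperOnBounded ↔ FiniteDimensional 𝕜 T.ker ∧ IsClosed (range T) := by
  -- `T.prod P` is injective and has closed range iff `T` does; for injective maps between Banach
  -- spaces, both closed range and sequential properness amount to being antilipschitz.
  by_cases hfin : FiniteDimensional 𝕜 T.ker
  swap
  · exact iff_of_false (fun h => hfin h.finiteDimensional_ker) (fun h => hfin h.1)
  obtain ⟨P, hP⟩ := Submodule.ClosedComplemented.of_finiteDimensional T.ker
  have : CompleteSpace T.ker := FiniteDimensional.complete 𝕜 _
  have hPc : IsCompactOperator P :=
    (isCompactOperator_id_iff_finiteDimensional.mpr hfin).comp_clm P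
  rw [and_iff_right hfin, ← isClosed_range_prod_iff_of_projection hP,
    (T.prod P).isClosed_range_iff_antilipschitz_of_injective (injective_prod_of_projection hP)]
  exact ⟨fun h => (h.prod P).exists_antilipschitzWith (injective_prod_of_projection hP),
    fun ⟨_, hK⟩ => (isSeqProperOnBounded_of_antilipschitz hK).of_prod_compact hPc⟩

end ContinuousLinearMap

namespace Submodule

variable {𝕜 E : Type*} [RCLike 𝕜] [NormedAddCommGroup E] [NormedSpace 𝕜 E]

def addMap (p q : Submodule 𝕜 E) (W : E →L[𝕜] E) : p × q →L[𝕜] E :=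
  p.subtypeL.coprod (W ∘L q.subtypeL)

variable (p q : Submodule 𝕜 E)

theorem range_addMap (W : E →L[𝕜] E) :
    range (p.addMap q W) = ((p ⊔ q.map (W : E →ₗ[𝕜] E) : Submodule 𝕜 E) : Set E) := by
  change ((p.addMap q W).range : Set E) = _
  simp [addMap, LinearMap.range_coprod, LinearMap.range_comp]

noncomputable def kerAddMapEquiv {W : E →L[𝕜] E} (hW : Injective W) :
    (p.addMap q W).ker ≃ₗ[𝕜] ↥(p ⊓ q.map (W : E →ₗ[𝕜] E)) := by
  have hker {v : p × q} (hv : v ∈ (p.addMap q W).ker) : W v.2 = -v.1 :=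
    eq_neg_of_add_eq_zero_right hv
  refine .ofBijective
    (((p.subtype ∘ₗ LinearMap.fst 𝕜 p q) ∘ₗ (p.addMap q W).ker.subtype).codRestrict _ fun v =>
      mem_inf.mpr ⟨v.1.1.2, mem_map.mpr ⟨-(v.1.2 : E), neg_mem v.1.2.2, by simp [hker v.2]⟩⟩)
    ⟨?_, ?_⟩
  · rintro ⟨⟨a, b⟩, hv⟩ ⟨⟨a', b'⟩, hv'⟩ h
    have ha : (a : E) = a' := by simpa using congrArg Subtype.val h
    have hb : (b : E) = b' := hW (by rw [hker hv, hker hv', ha])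
    simp [Subtype.ext ha, Subtype.ext hb]
  · rintro ⟨z, hzp, b, hb, rfl⟩
    refine ⟨⟨(⟨W b, hzp⟩, -⟨b, hb⟩), ?_⟩, rfl⟩
    simp [addMap]

theorem isSeqProperOnBounded_addMap_iff [CompleteSpace E] (hp : IsClosed (p : Set E))
    (hq : IsClosed (q : Set E)) {W : E →L[𝕜] E} (hW : Injective W) :
    (p.addMap q W).IsSeqProperOnBounded ↔ FiniteDimensional 𝕜 ↥(p ⊓ q.map (W : E →ₗ[𝕜] E)) ∧
      IsClosed ((p ⊔ q.map (W : E →ₗ[𝕜] E) : Submodule 𝕜 E) : Set E) := by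
  have := hp.completeSpace_coe
  have := hq.completeSpace_coe
  rw [ContinuousLinearMap.isSeqProperOnBounded_iff, range_addMap]
  exact and_congr (Module.Finite.equiv_iff (p.kerAddMapEquiv q hW)) Iff.rfl

theorem isSeqProperOnBounded_addMap_iff_of_isCompactOperator {U : E →L[𝕜] E}
    (hU : IsCompactOperator fun x => U x - x) :
    (p.addMap q U).IsSeqProperOnBounded ↔ (p.addMap q 1).IsSeqProperOnBounded := by
  have hK : IsCompactOperator (p.addMap q U - p.addMap q 1) := by
    have : ⇑(p.addMap q U - p.addMap q 1) =
        (fun x => U x - x) ∘ (q.subtypeL ∘L ContinuousLinearMap.snd 𝕜 p q) := by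
      ext; simp [addMap]
    rw [this]
    exact hU.comp_clm _
  rw [← ContinuousLinearMap.isSeqProperOnBounded_add_compact_iff (T := p.addMap q 1) hK,
    add_sub_cancel]

theorem finiteDimensional_inf_and_isClosed_sup_map_iff [CompleteSpace E]
    (hp : IsClosed (p : Set E)) (hq : IsClosed (q : Set E)) {U : E →L[𝕜] E}
    (hU_inj : Injective U) (hU : IsCompactOperator fun x => U x - x) :
    (FiniteDimensional 𝕜 ↥(p ⊓ q) ∧ IsClosed ((p ⊔ q : Submodule 𝕜 E) : Set E)) ↔
      (FiniteDimensional 𝕜 ↥(p ⊓ q.map (U : E →ₗ[𝕜] E)) ∧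
        IsClosed ((p ⊔ q.map (U : E →ₗ[𝕜] E) : Submodule 𝕜 E) : Set E)) := by
  have hq1 : q.map ((1 : E →L[𝕜] E) : E →ₗ[𝕜] E) = q := q.map_id
  rw [← p.isSeqProperOnBounded_addMap_iff q hp hq hU_inj,
    isSeqProperOnBounded_addMap_iff_of_isCompactOperator p q hU,
    p.isSeqProperOnBounded_addMap_iff q hp hq injective_id, hq1]

end Submodule

section Symplectic

variable {H : Type*} [NormedAddCommGroup H] [InnerProductSpace ℝ H] (J : H →L[ℝ] H)

theorem isClosed_omegaAnn (s : Set H) : IsClosed (omegaAnn J s) := by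
  simp only [omegaAnn, ofPred_forall]
  exact isClosed_biInter fun y _ =>
    isClosed_eq (J.continuous.inner continuous_const) continuous_const

theorem omegaAnn_image (U : H ≃ₗᵢ[ℝ] H) (hUJ : ∀ x, U (J x) = J (U x)) (s : Set H) :
    omegaAnn J (U '' s) = U '' omegaAnn J s := by
  ext x
  obtain ⟨x, rfl⟩ := U.surjective x
  simp [omegaAnn, ← hUJ]

variable {J} (hJ : ∀ x, J (J x) = -x)
include hJ

theorem orthogonal_eq_map_of_omegaAnn_eq {μ : Submodule ℝ H} (hμ : omegaAnn J μ = μ) :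
    μᗮ = μ.map (J : H →ₗ[ℝ] H) := by
  have hJ_neg (x : H) : J (-J x) = x := by simp [hJ]
  ext x
  rw [Submodule.mem_orthogonal', Submodule.mem_map]
  constructor
  · intro hx
    refine ⟨-J x, ?_, hJ_neg x⟩
    rw [← SetLike.mem_coe, ← hμ]
    intro u hu
    simpa [hJ_neg x] using hx u hu
  · rintro ⟨y, hy, rfl⟩ u hu
    rw [← SetLike.mem_coe, ← hμ] at hy
    exact hy u hu

theorem finiteDimensional_quotient_sup_of_omegaAnn_eq [CompleteSpace H] {ν μ : Submodule ℝ H}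
    (hν : omegaAnn J ν = ν) (hμ : omegaAnn J μ = μ)
    (hcl : IsClosed ((ν ⊔ μ : Submodule ℝ H) : Set H)) [FiniteDimensional ℝ ↥(ν ⊓ μ)] :
    FiniteDimensional ℝ (H ⧸ (ν ⊔ μ)) := by
  have := hcl.completeSpace_coe
  have hJ_inj : Injective J := fun a b hab => by simpa [hJ] using congrArg J hab
  have horth : (ν ⊔ μ)ᗮ = (ν ⊓ μ).map (J : H →ₗ[ℝ] H) := by
    rw [← Submodule.inf_orthogonal, orthogonal_eq_map_of_omegaAnn_eq hJ hν,
      orthogonal_eq_map_of_omegaAnn_eq hJ hμ, Submodule.map_inf _ hJ_inj]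
  have : FiniteDimensional ℝ (ν ⊔ μ)ᗮ := by rw [horth]; infer_instance
  exact (Submodule.quotientEquivOfIsCompl _ _ (ν ⊔ μ).isCompl_orthogonal).symm.finiteDimensional

theorem isFredholmPair_iff_of_omegaAnn_eq [CompleteSpace H] {ν μ : Submodule ℝ H}
    (hν : omegaAnn J ν = ν) (hμ : omegaAnn J μ = μ) :
    IsFredholmPair ν μ ↔
      FiniteDimensional ℝ ↥(ν ⊓ μ) ∧ IsClosed ((ν ⊔ μ : Submodule ℝ H) : Set H) :=
  ⟨fun h => ⟨h.1, h.2.1⟩, fun ⟨hfin, hcl⟩ =>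
    ⟨hfin, hcl, finiteDimensional_quotient_sup_of_omegaAnn_eq hJ hν hμ hcl⟩⟩

end Symplectic

theorem fredholmPair_invariant_under_unitary_compact_perturbation_general
    {H : Type*} [NormedAddCommGroup H] [InnerProductSpace ℝ H] [CompleteSpace H]
    (J : H →L[ℝ] H) (hJ2 : ∀ x : H, J (J x) = -x)
    (lam : Submodule ℝ H) (hlam : omegaAnn J (lam : Set H) = (lam : Set H))
    (U : H →L[ℝ] H) (hUbij : Function.Bijective ⇑U)
    (hUiso : ∀ x y : H, ⟪U x, U y⟫ = ⟪x, y⟫)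
    (hUJ : ∀ x : H, U (J x) = J (U x))
    (hUcpt : IsCompactOperator (fun x : H => U x - x)) :
    omegaAnn J (⇑U '' (lam : Set H)) = ⇑U '' (lam : Set H) ∧
    ∀ ν : Submodule ℝ H, omegaAnn J (ν : Set H) = (ν : Set H) →
      (IsFredholmPair ν lam ↔ IsFredholmPair ν (lam.map (U : H →ₗ[ℝ] H))) := by
  let V : H ≃ₗᵢ[ℝ] H := .ofSurjective ((U : H →ₗ[ℝ] H).isometryOfInner hUiso) hUbij.2
  have hUlam : omegaAnn J (U '' lam) = U '' lam :=
    (omegaAnn_image J V hUJ lam).trans (congrArg (V '' ·) hlam)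
  refine ⟨hUlam, fun ν hν => ?_⟩
  rw [isFredholmPair_iff_of_omegaAnn_eq hJ2 hν hlam,
    isFredholmPair_iff_of_omegaAnn_eq hJ2 hν (by rwa [Submodule.map_coe])]
  exact ν.finiteDimensional_inf_and_isClosed_sup_map_iff lam (hν ▸ isClosed_omegaAnn J ν)
    (hlam ▸ isClosed_omegaAnn J lam) hUbij.1 hUcpt

/-- If `U` is unitary (bijective, isometric, commuting with `J`) with `U − Id` compact, then
`U(λ)` is Lagrangian and for every Lagrangian `ν`, `(ν, λ)` is a Fredholm pair iff
`(ν, U(λ))` is. -/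
theorem fredholmPair_invariant_under_unitary_compact_perturbation
    {H : Type*} [NormedAddCommGroup H] [InnerProductSpace ℝ H] [CompleteSpace H]
    (J : H →L[ℝ] H) (hJ2 : ∀ x : H, J (J x) = -x)
    (hJorth : ∀ x y : H, ⟪J x, J y⟫ = ⟪x, y⟫)
    (lam : Submodule ℝ H) (hlam : omegaAnn J (lam : Set H) = (lam : Set H))
    (U : H →L[ℝ] H) (hUbij : Function.Bijective ⇑U)
    (hUiso : ∀ x y : H, ⟪U x, U y⟫ = ⟪x, y⟫)
    (hUJ : ∀ x : H, U (J x) = J (U x))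
    (hUcpt : IsCompactOperator (fun x : H => U x - x)) :
    omegaAnn J (⇑U '' (lam : Set H)) = ⇑U '' (lam : Set H) ∧
    ∀ ν : Submodule ℝ H, omegaAnn J (ν : Set H) = (ν : Set H) →
      (IsFredholmPair ν lam ↔ IsFredholmPair ν (lam.map (U : H →ₗ[ℝ] H))) :=
  fredholmPair_invariant_under_unitary_compact_perturbation_general J hJ2 lam hlam U hUbij hUiso hUJ
    hUcpt
end

section
/- Let H be a real Hilbert space and ω : H × H → ℝ a bounded bilinear form that is skew-symmetric (ω(x, y) = −ω(y, x)) and nondegenerate in the sense that the bounded operator A : H → H determined by ⟨A x, y⟩ = ω(x, y) is bijective. Then there exist a bounded, selfadjoint, positive, invertible operator T : H → H and a bounded operator J : H → H such that J ∘ J = −Id, ω(x, y) = ⟨T(J x), y⟩ for all x, y, and ⟨T(J x), J y⟩ = ⟨T x, y⟩ for all x, y. In other words, ⟨x, y⟩' := ⟨T x, y⟩ is an inner product on H inducing a norm equivalent to the original one, with respect to which J is an isometric almost complex structure and ω(x, y) = ⟨J x, y⟩'. -/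
/-!
`T` is the modulus `|A| = √(A†A) = √(-A²)` and `J = T⁻¹A`. Since `A` is skew-adjoint and commutes
with `T`, `J² = T⁻²A² = -1` and `J†TJ = -AT⁻¹A = T`.

The square root of a positive operator `S` is `√M · √(1 - X)` with `X = 1 - S/M`, `M = ‖S‖ + 1`,
so that `‖X‖ ≤ 1`. Here `√(1 - X) = ∑ cₙ Xⁿ` is the binomial series, `c₀ = 1`,
`cₙ₊₁ = -Catalanₙ / (2·4ⁿ)`: the Catalan recursion says that `∑ cₙ tⁿ` squares to `1 - t`, and the
partial sums `∑_{n<N} |cₙ₊₁| = 1 - binom(2N, N)/4ᴺ` show that the series converges absolutely on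
the closed unit ball with `‖√(1 - X) - 1‖ ≤ 1`, which makes `√(1 - X)` positive.
-/

open Finset
open scoped RealInnerProductSpace

noncomputable def sqrtOneSubCoeff : ℕ → ℝ
  | 0 => 1
  | n + 1 => -(catalan n / (2 * 4 ^ n))

@[simp] lemma sqrtOneSubCoeff_zero : sqrtOneSubCoeff 0 = 1 := rfl

lemma sqrtOneSubCoeff_succ (n : ℕ) :
    sqrtOneSubCoeff (n + 1) = -(catalan n / (2 * 4 ^ n)) := rfl

lemma sum_antidiagonal_sqrtOneSubCoeff_mul (n : ℕ) :
    ∑ p ∈ antidiagonal n, sqrtOneSubCoeff p.1 * sqrtOneSubCoeff p.2 =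
      if n = 0 then 1 else if n = 1 then -1 else 0 := by
  match n with
  | 0 => simp
  | 1 => norm_num [Nat.sum_antidiagonal_succ, sqrtOneSubCoeff_succ]
  | m + 2 =>
    have inner : ∑ p ∈ antidiagonal m, sqrtOneSubCoeff (p.1 + 1) * sqrtOneSubCoeff (p.2 + 1) =
        catalan (m + 1) / (4 * 4 ^ m) := by
      rw [catalan_succ', Nat.cast_sum, sum_div]
      refine sum_congr rfl fun p hp => ?_
      rw [← mem_antidiagonal.mp hp, sqrtOneSubCoeff_succ, sqrtOneSubCoeff_succ, pow_add]
      push_cast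
      ring
    rw [Nat.sum_antidiagonal_succ, Nat.sum_antidiagonal_succ', inner, if_neg (by omega),
      if_neg (by omega), sqrtOneSubCoeff_zero, sqrtOneSubCoeff_succ, pow_succ]
    ring

lemma sum_range_abs_sqrtOneSubCoeff_succ (N : ℕ) :
    ∑ n ∈ range N, |sqrtOneSubCoeff (n + 1)| = 1 - N.centralBinom / 4 ^ N := by
  induction N with
  | zero => simp
  | succ N ih =>
    have hbinom : ((N : ℝ) + 1) * (N + 1).centralBinom = 2 * (2 * N + 1) * N.centralBinom := by
      exact_mod_cast Nat.succ_mul_centralBinom_succ N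
    have hcat : ((N : ℝ) + 1) * catalan N = N.centralBinom := by
      exact_mod_cast succ_mul_catalan_eq_centralBinom N
    have key : 4 * (N.centralBinom : ℝ) - (N + 1).centralBinom - 2 * catalan N = 0 := by
      refine (mul_eq_zero.mp ?_).resolve_left (by positivity : (N : ℝ) + 1 ≠ 0)
      linear_combination -hbinom - 2 * hcat
    rw [sum_range_succ, ih, sqrtOneSubCoeff_succ, abs_neg, abs_of_nonneg (by positivity),
      pow_succ]
    field_simp
    linear_combination -2 * key

lemma sum_range_abs_sqrtOneSubCoeff_succ_le_one (N : ℕ) :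
    ∑ n ∈ range N, |sqrtOneSubCoeff (n + 1)| ≤ 1 := by
  rw [sum_range_abs_sqrtOneSubCoeff_succ, sub_le_self_iff]
  positivity

lemma summable_abs_sqrtOneSubCoeff_succ : Summable fun n => |sqrtOneSubCoeff (n + 1)| :=
  summable_of_sum_range_le (fun _ => abs_nonneg _) sum_range_abs_sqrtOneSubCoeff_succ_le_one

lemma tsum_abs_sqrtOneSubCoeff_succ_le_one : ∑' n, |sqrtOneSubCoeff (n + 1)| ≤ 1 :=
  Real.tsum_le_of_sum_range_le (fun _ => abs_nonneg _) sum_range_abs_sqrtOneSubCoeff_succ_le_one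

section NormedAlgebra

variable {𝔸 : Type*} [NormedRing 𝔸] [NormedAlgebra ℝ 𝔸]

noncomputable def sqrtOneSub (x : 𝔸) : 𝔸 := ∑' n, sqrtOneSubCoeff n • x ^ n

lemma norm_sqrtOneSubCoeff_succ_smul_pow_le {x : 𝔸} (hx : ‖x‖ ≤ 1) (n : ℕ) :
    ‖sqrtOneSubCoeff (n + 1) • x ^ (n + 1)‖ ≤ |sqrtOneSubCoeff (n + 1)| :=
  calc ‖sqrtOneSubCoeff (n + 1) • x ^ (n + 1)‖
      ≤ |sqrtOneSubCoeff (n + 1)| * ‖x ^ (n + 1)‖ := norm_smul_le _ _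
    _ ≤ |sqrtOneSubCoeff (n + 1)| * 1 := by
      gcongr
      exact (norm_pow_le' x n.succ_pos).trans (pow_le_one₀ (norm_nonneg x) hx)
    _ = |sqrtOneSubCoeff (n + 1)| := mul_one _

lemma summable_norm_sqrtOneSubCoeff_succ_smul_pow {x : 𝔸} (hx : ‖x‖ ≤ 1) :
    Summable fun n => ‖sqrtOneSubCoeff (n + 1) • x ^ (n + 1)‖ :=
  summable_abs_sqrtOneSubCoeff_succ.of_nonneg_of_le (fun _ => norm_nonneg _)
    (norm_sqrtOneSubCoeff_succ_smul_pow_le hx)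

lemma summable_norm_sqrtOneSubCoeff_smul_pow {x : 𝔸} (hx : ‖x‖ ≤ 1) :
    Summable fun n => ‖sqrtOneSubCoeff n • x ^ n‖ :=
  (summable_nat_add_iff 1).mp (summable_norm_sqrtOneSubCoeff_succ_smul_pow hx)

lemma Commute.sqrtOneSub {a x : 𝔸} (h : Commute a x) : Commute a (sqrtOneSub x) :=
  Commute.tsum_right _ fun n => (h.pow_right n).smul_right _

lemma IsSelfAdjoint.sqrtOneSub [StarRing 𝔸] [ContinuousStar 𝔸] [StarModule ℝ 𝔸] {x : 𝔸}
    (h : IsSelfAdjoint x) : IsSelfAdjoint (sqrtOneSub x) :=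
  tsum_star.trans (tsum_congr fun n => ((IsSelfAdjoint.all _).smul (h.pow n)).star_eq)

variable [CompleteSpace 𝔸]

lemma norm_sqrtOneSub_sub_one_le {x : 𝔸} (hx : ‖x‖ ≤ 1) : ‖sqrtOneSub x - 1‖ ≤ 1 := by
  have htail := summable_norm_sqrtOneSubCoeff_succ_smul_pow hx
  rw [sqrtOneSub, (summable_norm_sqrtOneSubCoeff_smul_pow hx).of_norm.tsum_eq_zero_add]
  simp only [sqrtOneSubCoeff_zero, pow_zero, one_smul, add_sub_cancel_left]
  calc ‖∑' n, sqrtOneSubCoeff (n + 1) • x ^ (n + 1)‖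
      ≤ ∑' n, ‖sqrtOneSubCoeff (n + 1) • x ^ (n + 1)‖ := norm_tsum_le_tsum_norm htail
    _ ≤ ∑' n, |sqrtOneSubCoeff (n + 1)| :=
      htail.tsum_le_tsum (norm_sqrtOneSubCoeff_succ_smul_pow_le hx)
        summable_abs_sqrtOneSubCoeff_succ
    _ ≤ 1 := tsum_abs_sqrtOneSubCoeff_succ_le_one

lemma sqrtOneSub_mul_self {x : 𝔸} (hx : ‖x‖ ≤ 1) : sqrtOneSub x * sqrtOneSub x = 1 - x := by
  have h := summable_norm_sqrtOneSubCoeff_smul_pow hx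
  have hterm (n : ℕ) :
      ∑ p ∈ antidiagonal n, sqrtOneSubCoeff p.1 • x ^ p.1 * (sqrtOneSubCoeff p.2 • x ^ p.2) =
        (∑ p ∈ antidiagonal n, sqrtOneSubCoeff p.1 * sqrtOneSubCoeff p.2) • x ^ n := by
    rw [sum_smul]
    refine sum_congr rfl fun p hp => ?_
    rw [smul_mul_smul_comm, ← pow_add, mem_antidiagonal.mp hp]
  rw [sqrtOneSub, tsum_mul_tsum_eq_tsum_sum_antidiagonal_of_summable_norm h h]
  simp_rw [hterm, sum_antidiagonal_sqrtOneSubCoeff_mul]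
  rw [tsum_eq_sum (s := range 2) fun n hn => by
    simp only [mem_range, not_lt] at hn
    simp [show n ≠ 0 by omega, show n ≠ 1 by omega]]
  simp [sum_range_succ, sub_eq_add_neg]

end NormedAlgebra

namespace ContinuousLinearMap

variable {E : Type*} [NormedAddCommGroup E] [InnerProductSpace ℝ E]

lemma norm_le_one_of_abs_inner_self_le {X : E →L[ℝ] E} (hX : X.IsSymmetric)
    (h : ∀ x, |⟪X x, x⟫| ≤ ‖x‖ ^ 2) : ‖X‖ ≤ 1 := by
  rw [X.norm_eq_iSup_rayleighQuotient hX]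
  refine ciSup_le fun x => ?_
  rw [rayleighQuotient, reApplyInnerSelf_apply, RCLike.re_to_real, abs_div, abs_sq]
  exact div_le_one_of_le₀ (h x) (sq_nonneg _)

lemma IsPositive.norm_one_sub_smul_le_one {S : E →L[ℝ] E} (hS : S.IsPositive) {t : ℝ}
    (ht₀ : 0 ≤ t) (ht : t * ‖S‖ ≤ 1) : ‖1 - t • S‖ ≤ 1 := by
  refine norm_le_one_of_abs_inner_self_le (isPositive_one.isSymmetric.sub
    (hS.smul_of_nonneg ht₀).isSymmetric) fun x => ?_
  have hSx : ⟪S x, x⟫ ≤ ‖S‖ * ‖x‖ ^ 2 := by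
    calc ⟪S x, x⟫ ≤ ‖S x‖ * ‖x‖ := real_inner_le_norm _ _
      _ ≤ ‖S‖ * ‖x‖ * ‖x‖ := by gcongr; exact S.le_opNorm x
      _ = ‖S‖ * ‖x‖ ^ 2 := by ring
  have hinner : ⟪(1 - t • S) x, x⟫ = ‖x‖ ^ 2 - t * ⟪S x, x⟫ := by
    simp [inner_sub_left, real_inner_smul_left]
  rw [hinner, abs_le]
  constructor <;> nlinarith [hS.inner_nonneg_left x, sq_nonneg ‖x‖]

lemma isPositive_of_norm_sub_one_le {R : E →L[ℝ] E} (hR : R.IsSymmetric) (h : ‖R - 1‖ ≤ 1) :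
    R.IsPositive := by
  refine (isPositive_iff R).mpr ⟨hR, fun x => ?_⟩
  have hinner : ⟪R x, x⟫ = ‖x‖ ^ 2 + ⟪(R - 1) x, x⟫ := by
    simp [inner_sub_left]
  have hbound : |⟪(R - 1) x, x⟫| ≤ ‖x‖ ^ 2 :=
    calc |⟪(R - 1) x, x⟫| ≤ ‖(R - 1) x‖ * ‖x‖ := abs_real_inner_le_norm _ _
      _ ≤ ‖R - 1‖ * ‖x‖ * ‖x‖ := by gcongr; exact (R - 1).le_opNorm x
      _ ≤ 1 * ‖x‖ * ‖x‖ := by gcongr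
      _ = ‖x‖ ^ 2 := by ring
  rw [hinner]
  linarith [neg_abs_le ⟪(R - 1) x, x⟫]

variable [CompleteSpace E]

theorem IsPositive.exists_sqrt {S : E →L[ℝ] E} (hS : S.IsPositive) :
    ∃ R : E →L[ℝ] E, R.IsPositive ∧ R * R = S ∧ ∀ a, Commute a S → Commute a R := by
  set M := ‖S‖ + 1
  have hM : 0 < M := by positivity
  set X := 1 - M⁻¹ • S
  have hX : ‖X‖ ≤ 1 := hS.norm_one_sub_smul_le_one (by positivity) <| by
    rw [inv_mul_le_iff₀ hM]; linarith
  have hXsa : IsSelfAdjoint X :=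
    (IsSelfAdjoint.one _).sub ((IsSelfAdjoint.all _).smul hS.isSelfAdjoint)
  refine ⟨√M • sqrtOneSub X, ?_, ?_, fun a ha => ?_⟩
  · exact (isPositive_of_norm_sub_one_le hXsa.sqrtOneSub.isSymmetric
      (norm_sqrtOneSub_sub_one_le hX)).smul_of_nonneg (Real.sqrt_nonneg M)
  · rw [smul_mul_smul_comm, Real.mul_self_sqrt hM.le, sqrtOneSub_mul_self hX, sub_sub_cancel,
      smul_inv_smul₀ hM.ne']
  · exact ((((Commute.one_right a).sub_right (ha.smul_right _))).sqrtOneSub).smul_right _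

end ContinuousLinearMap

theorem IsUnit.exists_complexStructure_of_star_eq_neg {R : Type*} [Ring R] [StarRing R] {a t : R}
    (ha : star a = -a) (ht : IsUnit t) (hts : IsSelfAdjoint t) (htt : t * t = star a * a)
    (hat : Commute a t) :
    ∃ j : R, t * j = a ∧ j * j = -1 ∧ star j * t * j = t := by
  obtain ⟨u, rfl⟩ := ht
  have hinv : star (↑u⁻¹ : R) = ↑u⁻¹ := by
    rw [← Units.coe_star_inv, show star u = u from Units.ext hts.star_eq]
  have haa : a * a = -(↑u * ↑u) := by rw [htt, ha, neg_mul, neg_neg]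
  have hau : a * ↑u⁻¹ = ↑u⁻¹ * a := hat.units_inv_right.eq
  refine ⟨↑u⁻¹ * a, u.mul_inv_cancel_left a, ?_, ?_⟩
  · calc ↑u⁻¹ * a * (↑u⁻¹ * a) = ↑u⁻¹ * (↑u⁻¹ * (a * a)) := by
          rw [mul_assoc, ← mul_assoc a, hau, mul_assoc]
      _ = -1 := by simp [haa]
  · calc star (↑u⁻¹ * a) * ↑u * (↑u⁻¹ * a) = -(a * ↑u⁻¹ * a) := by
          simp [star_mul, hinv, ha, mul_assoc]
      _ = ↑u := by rw [hau, mul_assoc, haa]; simp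

/-- Any bounded nondegenerate skew-symmetric bilinear form `ω` on a real Hilbert space is
compatible with some equivalent inner product `⟪x, y⟫' = ⟪T x, y⟫` and orthogonal almost
complex structure `J`: `ω(x, y) = ⟪T (J x), y⟫` and `⟪T (J x), J y⟫ = ⟪T x, y⟫`. -/
theorem exists_compatible_structure
    {H : Type*} [NormedAddCommGroup H] [InnerProductSpace ℝ H] [CompleteSpace H]
    (ω : H → H → ℝ) (hskew : ∀ x y : H, ω x y = -ω y x)
    (A : H →L[ℝ] H) (hA : ∀ x y : H, ⟪A x, y⟫ = ω x y)
    (hAbij : Function.Bijective ⇑A) :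
    ∃ (T : H →L[ℝ] H) (J : H →L[ℝ] H),
      (∀ x y : H, ⟪T x, y⟫ = ⟪x, T y⟫) ∧
      (∀ x : H, 0 ≤ ⟪T x, x⟫) ∧
      Function.Bijective ⇑T ∧
      (∀ x : H, J (J x) = -x) ∧
      (∀ x y : H, ω x y = ⟪T (J x), y⟫) ∧
      (∀ x y : H, ⟪T (J x), J y⟫ = ⟪T x, y⟫) := by
  have hAskew : star A = -A := ContinuousLinearMap.ext fun x => ext_inner_right ℝ fun y => by
    rw [ContinuousLinearMap.star_eq_adjoint, ContinuousLinearMap.adjoint_inner_left,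
      real_inner_comm, hA, hskew, ← hA, neg_apply, inner_neg_left]
  have hAcomm : Commute A (star A * A) := by
    rw [hAskew, neg_mul]
    exact ((Commute.refl A).mul_right (Commute.refl A)).neg_right
  obtain ⟨T, hTpos, hTT, hTcomm⟩ :=
    (ContinuousLinearMap.isPositive_adjoint_comp_self A).exists_sqrt
  replace hTT : T * T = star A * A := hTT
  have hTunit : IsUnit T := by
    rw [← isUnit_mul_self_iff, hTT, hAskew, neg_mul, IsUnit.neg_iff, isUnit_mul_self_iff,
      ContinuousLinearMap.isUnit_iff_bijective]
    exact hAbij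
  obtain ⟨J, hTJ, hJJ, hJTJ⟩ := hTunit.exists_complexStructure_of_star_eq_neg hAskew
    hTpos.isSelfAdjoint hTT (hTcomm A hAcomm)
  refine ⟨T, J, hTpos.inner_left_eq_inner_right, hTpos.inner_nonneg_left,
    ContinuousLinearMap.isUnit_iff_bijective.mp hTunit, fun x => ?_, fun x y => ?_, fun x y => ?_⟩
  · simpa using congr($hJJ x)
  · rw [← hA, ← hTJ]; rfl
  · calc ⟪T (J x), J y⟫ = ⟪(star J * T * J) x, y⟫ :=
          (ContinuousLinearMap.adjoint_inner_left J y _).symm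
      _ = ⟪T x, y⟫ := by rw [hJTJ]
end
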